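/- Suppose f is irreducible in ℤ[u^{±1}], noncyclotomic, and nonhyperbolic (i.e. f has a complex root of absolute value 1). Then α_f has no nonzero homoclinic points: if x ∈ X_f satisfies α_f^n x → 0 as |n| → ∞, then x = 0. -/

import Mathlib

open Filter Topology Polynomial

noncomputable section

/-- The circle `ℝ/ℤ`. -/
abbrev Torus := AddCircle (1 : ℝ)

/-- `f(σ)` acting on `𝕋^ℤ`. -/
def fsT (f : Polynomial ℤ) (x : ℤ → Torus) : ℤ → Torus :=
  fun n => ∑ k ∈ Finset.range (f.natDegree + 1), f.coeff k • x (n + (k : ℤ))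

/-- `X_f = ker f(σ) ⊆ 𝕋^ℤ`. -/
def Xf (f : Polynomial ℤ) : Set (ℤ → Torus) := {x | ∀ n, fsT f x n = 0}

/-- `σ^k` on `𝕋^ℤ`. -/
def shiftIterT (k : ℤ) (x : ℤ → Torus) : ℤ → Torus := fun n => x (n + k)

/-- A point of `𝕋^ℤ` is homoclinic (to `0`) if `σ^k x → 0` as `|k| → ∞`. -/
def HomoclinicT (x : ℤ → Torus) : Prop :=
  Tendsto (fun k : ℤ => shiftIterT k x) cofinite (nhds 0)

/-- `f` is noncyclotomic. -/
def Noncyclotomic (f : Polynomial ℤ) : Prop :=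
  ∀ θ : ℂ, Polynomial.aeval θ f = 0 → ∀ n : ℕ, 0 < n → θ ^ n ≠ 1

/-!
Lift a homoclinic point `x` to a real sequence `x̃ → 0`. Then `c = f(σ) x̃` is integer valued
and tends to `0`, so it is finitely supported: it encodes a polynomial `C ∈ ℤ[u]`. Over `ℂ` write
`f = (u - θ) h` with `|θ| = 1`; the decaying sequence `v = h(σ) x̃` satisfies `v (n + 1) = θ v n`
outside the support of `c`, which keeps `|v n|` constant there, so `v` is finitely supported too
and `C = (u - θ) V`. Thus `θ` is a common root of `f` and `C`, and irreducibility with Gauss's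
lemma gives `C = f g` in `ℤ[u]`. Now `x̃ - g` is a decaying solution of `f(σ) y = 0`, which must
vanish since every factor `σ - λ` forces geometric growth in one direction. So `x̃` is integer
valued and `x = 0`.
-/

section SeqShift

variable (R M : Type*) [CommSemiring R] [AddCommMonoid M] [Module R M]

def seqShift : Module.End R (ℤ → M) := LinearMap.funLeft R M (· + 1)

variable {R M}

theorem seqShift_pow_apply (k : ℕ) (y : ℤ → M) (n : ℤ) :
    (seqShift R M ^ k) y n = y (n + k) := by
  induction k generalizing y with
  | zero => simp
  | succ k ih =>
    rw [pow_succ, Module.End.mul_apply, ih]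
    simp [seqShift, add_assoc]

theorem aeval_seqShift_apply_eq_sum {P : R[X]} {m : ℕ} (hP : P.natDegree < m) (y : ℤ → M)
    (n : ℤ) : aeval (seqShift R M) P y n = ∑ k ∈ Finset.range m, P.coeff k • y (n + k) := by
  simp [aeval_eq_sum_range' hP, seqShift_pow_apply]

theorem aeval_seqShift_comp {N : Type*} [AddCommMonoid N] [Module R N] (φ : M →ₗ[R] N)
    (P : R[X]) (y : ℤ → M) :
    aeval (seqShift R N) P (φ ∘ y) = φ ∘ aeval (seqShift R M) P y := by
  ext n
  simp [aeval_seqShift_apply_eq_sum (Nat.lt_succ_self _)]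

theorem aeval_seqShift_map_algebraMap {S : Type*} [CommSemiring S] [Algebra R S] [Module S M]
    [IsScalarTower R S M] (P : R[X]) (y : ℤ → M) :
    aeval (seqShift S M) (P.map (algebraMap R S)) y = aeval (seqShift R M) P y := by
  ext n
  rw [aeval_seqShift_apply_eq_sum (Nat.lt_succ_of_le natDegree_map_le),
    aeval_seqShift_apply_eq_sum (Nat.lt_succ_self _)]
  simp [algebraMap_smul]

theorem aeval_seqShift_X_sub_C_apply {R M : Type*} [CommRing R] [AddCommGroup M] [Module R M]
    (l : R) (y : ℤ → M) (n : ℤ) :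
    aeval (seqShift R M) (X - C l) y n = y (n + 1) - l • y n := by
  simp [seqShift]

theorem tendsto_aeval_seqShift [TopologicalSpace M] [ContinuousAdd M] [ContinuousConstSMul R M]
    (P : R[X]) {y : ℤ → M} (hy : Tendsto y cofinite (𝓝 0)) :
    Tendsto (aeval (seqShift R M) P y) cofinite (𝓝 0) := by
  have hshift (k : ℕ) : Tendsto (fun n : ℤ => y (n + k)) cofinite (𝓝 0) :=
    hy.comp (add_left_injective _).tendsto_cofinite
  simpa [funext (aeval_seqShift_apply_eq_sum (Nat.lt_succ_self P.natDegree) y)] using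
    tendsto_finsetSum _ fun k _ => (hshift k).const_smul (P.coeff k)

end SeqShift

theorem aeval_seqShift_map_comp {A B : Type*} [CommRing A] [CommRing B] (φ : A →+* B) (f : ℤ[X])
    (y : ℤ → A) :
    aeval (seqShift B B) (f.map (algebraMap ℤ B)) (φ ∘ y) = φ ∘ aeval (seqShift ℤ A) f y := by
  rw [aeval_seqShift_map_algebraMap]
  exact aeval_seqShift_comp φ.toAddMonoidHom.toIntLinearMap f y

theorem fsT_eq_aeval_seqShift (f : ℤ[X]) (x : ℤ → Torus) :
    fsT f x = aeval (seqShift ℤ Torus) f x := by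
  ext n
  rw [aeval_seqShift_apply_eq_sum (Nat.lt_succ_self _), fsT]

section RevCoeffSeq

variable {R : Type*}

/-- Reversed so that `P(σ)` acts on these sequences as multiplication by `P`. -/
def revCoeffSeq [Semiring R] (N : ℤ) (Q : R[X]) : ℤ → R :=
  fun m => if m ≤ N then Q.coeff (N - m).toNat else 0

theorem revCoeffSeq_sub_natCast [Semiring R] (N : ℤ) (Q : R[X]) (j : ℕ) :
    revCoeffSeq N Q (N - j) = Q.coeff j := by
  simp [revCoeffSeq]

theorem revCoeffSeq_injective [Semiring R] (N : ℤ) :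
    Function.Injective (revCoeffSeq N : R[X] → ℤ → R) := fun P Q h =>
  Polynomial.ext fun j => by
    simpa only [revCoeffSeq_sub_natCast] using congrFun h (N - j)

theorem revCoeffSeq_map [Semiring R] {S : Type*} [Semiring S] (φ : R →+* S) (N : ℤ) (Q : R[X]) :
    revCoeffSeq N (Q.map φ) = φ ∘ revCoeffSeq N Q := by
  ext m
  simp only [revCoeffSeq, coeff_map, Function.comp_apply]
  split_ifs <;> simp

theorem revCoeffSeq_add [Semiring R] (N : ℤ) (P Q : R[X]) :
    revCoeffSeq N (P + Q) = revCoeffSeq N P + revCoeffSeq N Q := by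
  ext m
  simp only [revCoeffSeq, coeff_add, Pi.add_apply]
  split_ifs <;> simp

theorem revCoeffSeq_eq_zero_of_lt [Semiring R] {N n : ℤ} (Q : R[X]) (hn : n < N - Q.natDegree) :
    revCoeffSeq N Q n = 0 := by
  rw [revCoeffSeq, if_pos (by omega), coeff_eq_zero_of_natDegree_lt (by omega)]

theorem revCoeffSeq_support_subset [Semiring R] (N : ℤ) (Q : R[X]) :
    Function.support (revCoeffSeq N Q) ⊆ Set.Icc (N - Q.natDegree) N := fun n hn => by
  by_contra hout
  rw [Set.mem_Icc, not_and_or, not_le, not_le] at hout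
  rcases hout with h | h
  · exact hn (revCoeffSeq_eq_zero_of_lt Q h)
  · exact hn (by rw [revCoeffSeq, if_neg (by omega)])

theorem tendsto_revCoeffSeq [Semiring R] [TopologicalSpace R] (N : ℤ) (Q : R[X]) :
    Tendsto (revCoeffSeq N Q) cofinite (𝓝 0) :=
  tendsto_nhds_of_eventually_eq <| eventually_cofinite.2 <|
    (Set.finite_Icc _ _).subset (revCoeffSeq_support_subset N Q)

theorem aeval_seqShift_revCoeffSeq [CommSemiring R] (N : ℤ) (P Q : R[X]) :
    aeval (seqShift R R) P (revCoeffSeq N Q) = revCoeffSeq N (P * Q) := by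
  induction P using Polynomial.induction_on' with
  | add P₁ P₂ h₁ h₂ => simp [add_mul, revCoeffSeq_add, h₁, h₂]
  | monomial k a =>
    ext m
    rw [← C_mul_X_pow_eq_monomial, mul_assoc]
    simp only [revCoeffSeq, map_mul, aeval_C, aeval_X_pow, Module.End.mul_apply,
      seqShift_pow_apply, coeff_C_mul, coeff_X_pow_mul', Module.algebraMap_end_apply,
      Pi.smul_apply, smul_eq_mul]
    split_ifs <;> first | omega | simp | (congr 2; omega)

theorem exists_revCoeffSeq_eq [Semiring R] {y : ℤ → R} {M N : ℤ}
    (hy : Function.support y ⊆ Set.Icc M N) : ∃ Q : R[X], revCoeffSeq N Q = y := by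
  refine ⟨∑ j ∈ Finset.range ((N - M).toNat + 1), C (y (N - j)) * X ^ j, funext fun m => ?_⟩
  have hout (h : ¬ (M ≤ m ∧ m ≤ N)) : y m = 0 := Function.notMem_support.1 fun hm => h (hy hm)
  simp only [revCoeffSeq, finsetSum_coeff, coeff_C_mul_X_pow, Finset.sum_ite_eq, Finset.mem_range]
  split_ifs
  · congr 1; omega
  · exact (hout (by omega)).symm
  · exact (hout (by omega)).symm

end RevCoeffSeq

section Decay

variable {E : Type*} [NormedAddCommGroup E]

theorem eq_zero_of_tendsto_atTop_of_norm_le_succ {z : ℤ → E} {a : ℤ}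
    (hz : Tendsto z atTop (𝓝 0)) (hmono : ∀ n ≥ a, ‖z n‖ ≤ ‖z (n + 1)‖) : ∀ n ≥ a, z n = 0 := by
  intro n hn
  have hle : ∀ m ≥ n, ‖z n‖ ≤ ‖z m‖ := fun m hm => by
    induction m, hm using Int.leInduction with
    | base => rfl
    | succ m hm ih => exact ih.trans (hmono m (by omega))
  exact norm_le_zero_iff.1 <| ge_of_tendsto (by simpa using hz.norm) <|
    (eventually_ge_atTop n).mono hle

theorem eq_zero_of_tendsto_atBot_of_norm_succ_le {z : ℤ → E} {a : ℤ}
    (hz : Tendsto z atBot (𝓝 0)) (hmono : ∀ n < a, ‖z (n + 1)‖ ≤ ‖z n‖) : ∀ n ≤ a, z n = 0 := by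
  intro n hn
  have hle : ∀ m ≤ n, ‖z n‖ ≤ ‖z m‖ := fun m hm => by
    induction m, hm using Int.leInductionDown with
    | base => rfl
    | pred m hm ih => exact ih.trans (by simpa using hmono (m - 1) (by omega))
  exact norm_le_zero_iff.1 <| ge_of_tendsto (by simpa using hz.norm) <|
    (eventually_le_atBot n).mono hle

theorem eq_zero_of_tendsto_of_eq_smul {𝕜 : Type*} [NormedField 𝕜] [NormedSpace 𝕜 E] {z : ℤ → E}
    {l : 𝕜} (hz : Tendsto z cofinite (𝓝 0)) (hrec : ∀ n, z (n + 1) = l • z n) : z = 0 := by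
  rw [Int.cofinite_eq, tendsto_sup] at hz
  funext n
  rcases le_total 1 ‖l‖ with hl | hl
  · refine eq_zero_of_tendsto_atTop_of_norm_le_succ hz.2 (fun m _ => ?_) n le_rfl
    rw [hrec, norm_smul]
    exact le_mul_of_one_le_left (norm_nonneg _) hl
  · refine eq_zero_of_tendsto_atBot_of_norm_succ_le hz.1 (fun m _ => ?_) n le_rfl
    rw [hrec, norm_smul]
    exact mul_le_of_le_one_left (norm_nonneg _) hl

theorem eq_zero_of_tendsto_of_aeval_seqShift_eq_zero {𝕜 : Type*} [NormedField 𝕜] [IsAlgClosed 𝕜]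
    [NormedSpace 𝕜 E] {P : 𝕜[X]} (hP : P ≠ 0) {y : ℤ → E} (hy : Tendsto y cofinite (𝓝 0))
    (hPy : aeval (seqShift 𝕜 E) P y = 0) : y = 0 := by
  have hroots : ∀ (s : Multiset 𝕜) (y : ℤ → E), Tendsto y cofinite (𝓝 0) →
      aeval (seqShift 𝕜 E) (s.map fun l => X - C l).prod y = 0 → y = 0 := by
    intro s
    induction s using Multiset.induction with
    | empty => simp
    | cons l s ih =>
      intro y hy hsy
      rw [Multiset.map_cons, Multiset.prod_cons, map_mul, Module.End.mul_apply] at hsy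
      refine ih y hy (eq_zero_of_tendsto_of_eq_smul (l := l) (tendsto_aeval_seqShift _ hy)
        fun n => ?_)
      have := congrFun hsy n
      rwa [Pi.zero_apply, aeval_seqShift_X_sub_C_apply, sub_eq_zero] at this
  rw [← C_leadingCoeff_mul_prod_multiset_X_sub_C (p := P) IsAlgClosed.card_roots_eq_natDegree,
    map_mul, Module.End.mul_apply, aeval_C, Module.algebraMap_end_apply,
    smul_eq_zero_iff_right (leadingCoeff_ne_zero.2 hP)] at hPy
  exact hroots _ y hy hPy

theorem eq_revCoeffSeq_of_aeval_seqShift_eq {𝕜 : Type*} [NormedField 𝕜] [IsAlgClosed 𝕜]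
    {P G : 𝕜[X]} (hP : P ≠ 0) {y : ℤ → 𝕜} (hy : Tendsto y cofinite (𝓝 0)) {N : ℤ}
    (hPy : aeval (seqShift 𝕜 𝕜) P y = revCoeffSeq N (P * G)) : y = revCoeffSeq N G := by
  have hdecay := hy.sub (tendsto_revCoeffSeq N G)
  rw [sub_zero] at hdecay
  refine sub_eq_zero.1 (eq_zero_of_tendsto_of_aeval_seqShift_eq_zero hP hdecay ?_)
  rw [map_sub, hPy, aeval_seqShift_revCoeffSeq, sub_self]

theorem isRoot_of_aeval_seqShift_eq_revCoeffSeq {𝕜 : Type*} [NormedField 𝕜] {P Q : 𝕜[X]} {θ : 𝕜}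
    (hθ : ‖θ‖ = 1) (hPθ : P.IsRoot θ) {w : ℤ → 𝕜} (hw : Tendsto w cofinite (𝓝 0)) {N : ℤ}
    (hPw : aeval (seqShift 𝕜 𝕜) P w = revCoeffSeq N Q) : Q.IsRoot θ := by
  obtain ⟨h, rfl⟩ := dvd_iff_isRoot.2 hPθ
  set v := aeval (seqShift 𝕜 𝕜) h w
  have hQ : aeval (seqShift 𝕜 𝕜) (X - C θ) v = revCoeffSeq N Q := by
    rw [← hPw, map_mul, Module.End.mul_apply]
  have hnorm {n : ℤ} (hn : revCoeffSeq N Q n = 0) : ‖v (n + 1)‖ = ‖v n‖ := by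
    rw [← hQ, aeval_seqShift_X_sub_C_apply, sub_eq_zero] at hn
    rw [hn, norm_smul, hθ, one_mul]
  have hv := tendsto_aeval_seqShift h hw
  rw [Int.cofinite_eq, tendsto_sup] at hv
  have hv_top := eq_zero_of_tendsto_atTop_of_norm_le_succ hv.2 (a := N + 1) fun n hn =>
    (hnorm (by rw [revCoeffSeq, if_neg (by omega)])).ge
  have hv_bot := eq_zero_of_tendsto_atBot_of_norm_succ_le hv.1 (a := N - Q.natDegree) fun n hn =>
    (hnorm (revCoeffSeq_eq_zero_of_lt Q hn)).le
  obtain ⟨V, hV⟩ := exists_revCoeffSeq_eq (y := v) (M := N - Q.natDegree + 1) (N := N)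
    fun n hn => by
      by_contra hout
      exact hn (if hle : n ≤ N - Q.natDegree then hv_bot n hle else hv_top n (by grind))
  have hQV : Q = (X - C θ) * V :=
    revCoeffSeq_injective N (by rw [← aeval_seqShift_revCoeffSeq, hV, hQ])
  simp [hQV]

end Decay

section Divisibility

theorem isUnit_of_isUnit_toLaurent {R : Type*} [CommRing R] [IsDomain R] {a : R[X]}
    (ha : a.coeff 0 ≠ 0) (hu : IsUnit (toLaurent a)) : IsUnit a := by
  obtain ⟨v, hv⟩ := hu.exists_right_inv
  obtain ⟨n, b, hb⟩ := v.exists_T_pow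
  have hab : a * b = X ^ n :=
    toLaurent_injective (by rw [map_mul, hb, toLaurent_X_pow, ← mul_assoc, hv, one_mul])
  obtain ⟨i, -, hi⟩ := (dvd_prime_pow prime_X n).1 ⟨b, hab.symm⟩
  rcases i with _ | i
  · exact (associated_one_iff_isUnit.1 (by simpa using hi))
  · exact absurd (X_dvd_iff.1 ((dvd_pow_self X i.succ_ne_zero).trans hi.symm.dvd)) ha

theorem irreducible_of_irreducible_toLaurent {R : Type*} [CommRing R] [IsDomain R] {f : R[X]}
    (h0 : f.coeff 0 ≠ 0) (hf : Irreducible (toLaurent f)) : Irreducible f := by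
  refine ⟨fun hu => hf.not_isUnit (hu.map _), fun a b hab => ?_⟩
  have ha : a.coeff 0 ≠ 0 := fun h => h0 (by rw [hab, mul_coeff_zero, h, zero_mul])
  have hb : b.coeff 0 ≠ 0 := fun h => h0 (by rw [hab, mul_coeff_zero, h, mul_zero])
  exact (hf.isUnit_or_isUnit (by rw [hab, map_mul])).imp (isUnit_of_isUnit_toLaurent ha)
    (isUnit_of_isUnit_toLaurent hb)

theorem Polynomial.IsPrimitive.dvd_of_aeval_eq_zero {R K A : Type*} [CommRing R] [IsDomain R]
    [NormalizedGCDMonoid R] [Field K] [Algebra R K] [IsFractionRing R K] [CommRing A]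
    [Nontrivial A] [Algebra R A] [Algebra K A] [IsScalarTower R K A] {f g : R[X]}
    (hprim : f.IsPrimitive) (hirr : Irreducible f) {θ : A} (hf : aeval θ f = 0)
    (hg : aeval θ g = 0) : f ∣ g := by
  refine hprim.dvd_of_fraction_map_dvd_fraction_map (K := K) (not_not.1 fun hndvd => ?_)
  have hirrK := (hprim.irreducible_iff_irreducible_map_fraction_map (K := K)).1 hirr
  obtain ⟨u, v, huv⟩ := (hirrK.coprime_iff_not_dvd).2 hndvd
  simpa [aeval_map_algebraMap, hf, hg] using congrArg (aeval θ) huv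

end Divisibility

theorem AddCircle.exists_coe_eq_and_abs_eq_norm (p : ℝ) (t : AddCircle p) :
    ∃ r : ℝ, (r : AddCircle p) = t ∧ |r| = ‖t‖ := by
  obtain ⟨r, rfl⟩ := QuotientAddGroup.mk_surjective t
  refine ⟨r - round (p⁻¹ * r) * p, ?_, (AddCircle.norm_eq p).symm⟩
  rw [AddCircle.coe_sub, sub_eq_self, AddCircle.coe_eq_zero_iff]
  exact ⟨_, zsmul_eq_mul _ _⟩

theorem AddCircle.exists_lift_tendsto_zero {p : ℝ} {ι : Type*} {l : Filter ι}
    {x : ι → AddCircle p} (hx : Tendsto x l (𝓝 0)) :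
    ∃ xt : ι → ℝ, Tendsto xt l (𝓝 0) ∧ ∀ i, (xt i : AddCircle p) = x i := by
  choose xt hcoe habs using fun i => AddCircle.exists_coe_eq_and_abs_eq_norm p (x i)
  refine ⟨xt, ?_, hcoe⟩
  rw [tendsto_zero_iff_norm_tendsto_zero] at hx ⊢
  simpa only [Real.norm_eq_abs, habs] using hx

theorem HomoclinicT.tendsto {x : ℤ → Torus} (hx : HomoclinicT x) : Tendsto x cofinite (𝓝 0) := by
  refine (((continuous_apply 0).tendsto _).comp hx).congr fun k => ?_
  simp [shiftIterT]

theorem coe_aeval_seqShift_eq_zero_of_mem_Xf {f : ℤ[X]} {x : ℤ → Torus} (hx : x ∈ Xf f)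
    {xt : ℤ → ℝ} (hxt : ∀ n, (xt n : Torus) = x n) (n : ℤ) :
    (aeval (seqShift ℤ ℝ) f xt n : Torus) = 0 := by
  rw [← hx n, fsT_eq_aeval_seqShift, ← funext hxt]
  exact congrFun (aeval_seqShift_comp (QuotientAddGroup.mk' _).toIntLinearMap f xt).symm n

theorem exists_revCoeffSeq_eq_of_coe_eq_zero {c : ℤ → ℝ} (hc : Tendsto c cofinite (𝓝 0))
    (hint : ∀ n, (c n : Torus) = 0) :
    ∃ (N : ℤ) (C : ℤ[X]), Int.cast ∘ revCoeffSeq N C = c := by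
  choose cZ hcZ using fun n => (AddCircle.coe_eq_zero_iff 1).1 (hint n)
  simp only [zsmul_one] at hcZ
  have hfin : (Function.support cZ).Finite := by
    have : Tendsto cZ cofinite (𝓝 0) := by
      rw [Int.isClosedEmbedding_coe_real.tendsto_nhds_iff]
      simpa [Function.comp_def, hcZ] using hc
    rw [nhds_discrete, tendsto_pure, eventually_cofinite] at this
    exact this
  obtain ⟨M, hM⟩ := hfin.bddBelow
  obtain ⟨N, hN⟩ := hfin.bddAbove
  obtain ⟨C, hC⟩ := exists_revCoeffSeq_eq fun n hn => ⟨hM hn, hN hn⟩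
  exact ⟨N, C, funext fun n => by rw [Function.comp_apply, hC, hcZ]⟩

theorem no_homoclinic_points_nonhyperbolic_general (f : Polynomial ℤ) (hm : 1 ≤ f.natDegree)
    (h0 : f.coeff 0 ≠ 0)
    (hirr : Irreducible (Polynomial.toLaurent f))
    (hnonhyp : ∃ θ : ℂ, Polynomial.aeval θ f = 0 ∧ ‖θ‖ = 1) :
    ∀ x ∈ Xf f, HomoclinicT x → x = 0 := by
  intro x hx hhom
  obtain ⟨xt, hxt0, hxt⟩ := AddCircle.exists_lift_tendsto_zero hhom.tendsto
  obtain ⟨N, C, hC⟩ := exists_revCoeffSeq_eq_of_coe_eq_zero (tendsto_aeval_seqShift f hxt0)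
    (coe_aeval_seqShift_eq_zero_of_mem_Xf hx hxt)
  have hxc : Tendsto (Complex.ofRealHom ∘ xt) cofinite (𝓝 0) :=
    (Complex.continuous_ofReal.tendsto' 0 0 Complex.ofReal_zero).comp hxt0
  have hfxc : aeval (seqShift ℂ ℂ) (f.map (algebraMap ℤ ℂ)) (Complex.ofRealHom ∘ xt)
      = revCoeffSeq N (C.map (algebraMap ℤ ℂ)) := by
    rw [aeval_seqShift_map_comp, ← hC, revCoeffSeq_map]
    ext n
    simp
  obtain ⟨θ, hfθ, hθ⟩ := hnonhyp
  have hCθ : aeval θ C = 0 := by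
    rw [← eval_map_algebraMap, ← IsRoot.def]
    exact isRoot_of_aeval_seqShift_eq_revCoeffSeq hθ
      (by rwa [IsRoot.def, eval_map_algebraMap]) hxc hfxc
  have hfirr := irreducible_of_irreducible_toLaurent h0 hirr
  obtain ⟨g, rfl⟩ := (hfirr.isPrimitive (by omega)).dvd_of_aeval_eq_zero (K := ℚ) hfirr hfθ hCθ
  have hxg := eq_revCoeffSeq_of_aeval_seqShift_eq
    ((Polynomial.map_ne_zero_iff (algebraMap ℤ ℂ).injective_int).2 hfirr.ne_zero) hxc
    (by rw [hfxc, Polynomial.map_mul])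
  ext n
  have hn : (xt n : ℂ) = revCoeffSeq N g n := by simpa [revCoeffSeq_map] using congrFun hxg n
  rw [← hxt n, (by exact_mod_cast hn : xt n = revCoeffSeq N g n), Pi.zero_apply,
    AddCircle.coe_eq_zero_iff]
  exact ⟨_, zsmul_one _⟩

/-- if `f` is irreducible in `ℤ[u^{±1}]`, noncyclotomic and nonhyperbolic
(some complex root of `f` has absolute value 1), then `α_f` has no nonzero homoclinic
points. -/
theorem no_homoclinic_points_nonhyperbolic (f : Polynomial ℤ) (hm : 1 ≤ f.natDegree)
    (hlead : 0 < f.leadingCoeff) (h0 : f.coeff 0 ≠ 0)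
    (hirr : Irreducible (Polynomial.toLaurent f)) (hnc : Noncyclotomic f)
    (hnonhyp : ∃ θ : ℂ, Polynomial.aeval θ f = 0 ∧ ‖θ‖ = 1) :
    ∀ x ∈ Xf f, HomoclinicT x → x = 0 :=
  no_homoclinic_points_nonhyperbolic_general f hm h0 hirr hnonhyp

end
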